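/- Let h ∈ L²(P) be such that h·ε is integrable and E[hε | 𝒢]·(E[ε² | 𝒢])⁻¹·ε ∈ L²(P). Then the element E[hε | 𝒢]·(E[ε² | 𝒢])⁻¹·ε belongs to Λ, and h − E[hε | 𝒢]·(E[ε² | 𝒢])⁻¹·ε is orthogonal in L²(P) to every element of Λ; that is, E[hε | 𝒢]·(E[ε² | 𝒢])⁻¹·ε is the orthogonal projection of h onto Λ. -/

import Mathlib

/-!
With `c = E[hε | 𝒢] / E[ε² | 𝒢]`, the normal equation `E[hε | 𝒢] = c E[ε² | 𝒢]` and the pull-out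
property give `E[hε - cε² | 𝒢] = 0`. For `g` 𝒢-measurable, `(h - cε)(gε) = g (hε - cε²)`, whose
integral is that of `g E[hε - cε² | 𝒢] = 0`.
-/

open MeasureTheory

variable {Ω : Type*}

/-- The subspace `Λ = {g·ε : g 𝒢-measurable with g·ε ∈ L²(P)}`. -/
def LambdaEpsSet {m0 : MeasurableSpace Ω} (μ : Measure Ω) (m : MeasurableSpace Ω)
    (ε : Ω → ℝ) : Set (Ω → ℝ) :=
  {f | ∃ g : Ω → ℝ, StronglyMeasurable[m] g ∧ f = (fun ω => g ω * ε ω) ∧ MemLp f 2 μ}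

section CondExp

variable {m m0 : MeasurableSpace Ω} {μ : Measure Ω}

theorem integral_mul_eq_zero_of_condExp_ae_eq_zero (hm : m ≤ m0) [SigmaFinite (μ.trim hm)]
    {g w : Ω → ℝ} (hg : StronglyMeasurable[m] g) (hgw : Integrable (fun ω => g ω * w ω) μ)
    (hw : Integrable w μ) (hw0 : μ[w|m] =ᵐ[μ] 0) :
    ∫ ω, g ω * w ω ∂μ = 0 := by
  have hgw0 : μ[g * w|m] =ᵐ[μ] 0 := by
    filter_upwards [condExp_mul_of_stronglyMeasurable_left hg hgw hw, hw0] with ω hpull hω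
    simp [hpull, hω]
  calc ∫ ω, g ω * w ω ∂μ = ∫ ω, (μ[g * w|m]) ω ∂μ := (integral_condExp hm).symm
    _ = 0 := by simp [integral_congr_ae hgw0]

theorem condExp_sub_mul_ae_eq_zero_of_condExp_ae_eq_mul {X Y c : Ω → ℝ}
    (hc : StronglyMeasurable[m] c) (hX : Integrable X μ) (hY : Integrable Y μ)
    (hcY : Integrable (fun ω => c ω * Y ω) μ) (hXc : μ[X|m] =ᵐ[μ] fun ω => c ω * (μ[Y|m]) ω) :
    μ[fun ω => X ω - c ω * Y ω|m] =ᵐ[μ] 0 := by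
  have hpull : μ[fun ω => c ω * Y ω|m] =ᵐ[μ] c * μ[Y|m] :=
    condExp_mul_of_stronglyMeasurable_left hc hcY hY
  filter_upwards [condExp_sub hX hcY m, hpull, hXc] with ω hsub hpull hXc
  change μ[X - fun ω => c ω * Y ω|m] ω = 0
  simp [hsub, hpull, hXc]

theorem integral_sub_mul_mul_eq_zero_of_condExp_ae_eq_mul (hm : m ≤ m0)
    [SigmaFinite (μ.trim hm)] {h ε c g : Ω → ℝ} (hc : StronglyMeasurable[m] c)
    (hnormal : μ[fun ω => h ω * ε ω|m] =ᵐ[μ] fun ω => c ω * (μ[fun ω => ε ω ^ 2|m]) ω)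
    (hh : MemLp h 2 μ) (hε : MemLp ε 2 μ) (hcε : MemLp (fun ω => c ω * ε ω) 2 μ)
    (hg : StronglyMeasurable[m] g) (hgε : MemLp (fun ω => g ω * ε ω) 2 μ) :
    ∫ ω, (h ω - c ω * ε ω) * (g ω * ε ω) ∂μ = 0 := by
  have hcε2 : Integrable (fun ω => c ω * ε ω ^ 2) μ :=
    (hcε.integrable_mul hε).congr (.of_forall fun ω => by simp only [Pi.mul_apply]; ring)
  have hres := condExp_sub_mul_ae_eq_zero_of_condExp_ae_eq_mul hc (hh.integrable_mul hε)
    hε.integrable_sq hcε2 hnormal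
  have hint : Integrable (fun ω => g ω * (h ω * ε ω - c ω * ε ω ^ 2)) μ :=
    ((hgε.integrable_mul hh).sub (hgε.integrable_mul hcε)).congr
      (.of_forall fun ω => by simp only [Pi.sub_apply, Pi.mul_apply]; ring)
  rw [← integral_mul_eq_zero_of_condExp_ae_eq_zero hm hg hint
    ((hh.integrable_mul hε).sub hcε2) hres]
  congr 1 with ω
  ring

end CondExp

theorem projection_onto_LambdaEps_general
    {m0 : MeasurableSpace Ω} (μ : Measure Ω) [IsProbabilityMeasure μ]
    (m : MeasurableSpace Ω) (hm : m ≤ m0)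
    (ε : Ω → ℝ) (hε2 : MemLp ε 2 μ)
    (hVpos : ∀ᵐ ω ∂μ, 0 < (μ[(fun ω' => (ε ω')^2)|m]) ω)
    (h : Ω → ℝ) (hh2 : MemLp h 2 μ)
    (hL2 : MemLp (fun ω =>
      (μ[(fun ω' => h ω' * ε ω')|m]) ω * ((μ[(fun ω' => (ε ω')^2)|m]) ω)⁻¹ * ε ω) 2 μ) :
    (fun ω => (μ[(fun ω' => h ω' * ε ω')|m]) ω * ((μ[(fun ω' => (ε ω')^2)|m]) ω)⁻¹ * ε ω)
        ∈ LambdaEpsSet μ m ε ∧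
      ∀ f ∈ LambdaEpsSet μ m ε,
        ∫ ω, (h ω - (μ[(fun ω' => h ω' * ε ω')|m]) ω *
          ((μ[(fun ω' => (ε ω')^2)|m]) ω)⁻¹ * ε ω) * f ω ∂μ = 0 := by
  have hc : StronglyMeasurable[m]
      (fun ω => (μ[(fun ω' => h ω' * ε ω')|m]) ω * ((μ[(fun ω' => (ε ω')^2)|m]) ω)⁻¹) :=
    (stronglyMeasurable_condExp.measurable.mul
      stronglyMeasurable_condExp.measurable.inv).stronglyMeasurable
  have hnormal : μ[fun ω => h ω * ε ω|m] =ᵐ[μ] fun ω =>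
      (μ[(fun ω' => h ω' * ε ω')|m]) ω * ((μ[(fun ω' => (ε ω')^2)|m]) ω)⁻¹ *
        (μ[fun ω => ε ω ^ 2|m]) ω := by
    filter_upwards [hVpos] with ω hω
    field_simp
  refine ⟨⟨_, hc, rfl, hL2⟩, ?_⟩
  rintro f ⟨g, hg, rfl, hgε⟩
  exact integral_sub_mul_mul_eq_zero_of_condExp_ae_eq_mul hm hc hnormal hh2 hε2 hL2 hg hgε

/-- projection onto the subspace generated by `ε` over `𝒢`.
Let `(Ω, ℱ, P)` be a probability space, `𝒢 ⊆ ℱ` a sub-σ-algebra, `ε ∈ L²(P)` with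
`E[ε² | 𝒢] > 0` a.s.  Let `h ∈ L²(P)` with `hε` integrable and
`E[hε | 𝒢]·(E[ε² | 𝒢])⁻¹·ε ∈ L²(P)`.  Then `E[hε | 𝒢]·(E[ε² | 𝒢])⁻¹·ε` belongs to `Λ`
and `h − E[hε | 𝒢]·(E[ε² | 𝒢])⁻¹·ε` is orthogonal in `L²(P)` to every element of `Λ`;
i.e. it is the orthogonal projection of `h` onto `Λ`. -/
theorem projection_onto_LambdaEps
    {m0 : MeasurableSpace Ω} (μ : Measure Ω) [IsProbabilityMeasure μ]
    (m : MeasurableSpace Ω) (hm : m ≤ m0)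
    (ε : Ω → ℝ) (hε2 : MemLp ε 2 μ)
    (hVpos : ∀ᵐ ω ∂μ, 0 < (μ[(fun ω' => (ε ω')^2)|m]) ω)
    (h : Ω → ℝ) (hh2 : MemLp h 2 μ)
    (hhε : Integrable (fun ω => h ω * ε ω) μ)
    (hL2 : MemLp (fun ω =>
      (μ[(fun ω' => h ω' * ε ω')|m]) ω * ((μ[(fun ω' => (ε ω')^2)|m]) ω)⁻¹ * ε ω) 2 μ) :
    (fun ω => (μ[(fun ω' => h ω' * ε ω')|m]) ω * ((μ[(fun ω' => (ε ω')^2)|m]) ω)⁻¹ * ε ω)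
        ∈ LambdaEpsSet μ m ε ∧
      ∀ f ∈ LambdaEpsSet μ m ε,
        ∫ ω, (h ω - (μ[(fun ω' => h ω' * ε ω')|m]) ω *
          ((μ[(fun ω' => (ε ω')^2)|m]) ω)⁻¹ * ε ω) * f ω ∂μ = 0 :=
  projection_onto_LambdaEps_general μ m hm ε hε2 hVpos h hh2 hL2
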